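/- arXiv:1902.07863 — 8 statements merged into one kernel-verified Lean document; each statement's English description precedes it below -/
import Mathlib

section
/- Let G = (V,E) be a finite simple graph. Consider the integer program DRDP-1: minimize Σ_{v∈V} x_v + 2Σ_{v∈V} y_v + 3Σ_{v∈V} z_v over functions x, y, z : V → {0,1} subject to, for every v ∈ V: (i) x_v + y_v + z_v + (1/2)Σ_{u∈N(v)} y_u + Σ_{u∈N(v)} z_u ≥ 1; (ii) Σ_{u∈N(v)} y_u + Σ_{u∈N(v)} z_u ≥ x_v; (iii) x_v + y_v + z_v ≤ 1. Then the optimal (minimum) objective value of DRDP-1 equals the double Roman domination number γ_dR(G). -/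
open Finset

/-- A double Roman dominating function on a finite simple graph. -/
def IsDRDF {V : Type*} [Fintype V] (G : SimpleGraph V) [DecidableRel G.Adj]
    (f : V → ℕ) : Prop :=
  (∀ v, f v ≤ 3) ∧
  (∀ v, f v = 0 →
    (∃ u₁ u₂, u₁ ≠ u₂ ∧ G.Adj v u₁ ∧ G.Adj v u₂ ∧ f u₁ = 2 ∧ f u₂ = 2) ∨
    (∃ u, G.Adj v u ∧ f u = 3)) ∧
  (∀ v, f v = 1 → ∃ u, G.Adj v u ∧ 2 ≤ f u)

/-- The double Roman domination number. -/
noncomputable def gammaDR {V : Type*} [Fintype V] (G : SimpleGraph V)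
    [DecidableRel G.Adj] : ℕ :=
  sInf {w : ℕ | ∃ f : V → ℕ, IsDRDF G f ∧ w = ∑ v, f v}

private lemma exists_pair_of_two_le_sum {V : Type*} [DecidableEq V] {s : Finset V}
    {g : V → ℕ} (h1 : ∀ v, g v ≤ 1) (h : 2 ≤ ∑ u ∈ s, g u) :
    ∃ a ∈ s, ∃ b ∈ s, a ≠ b ∧ g a = 1 ∧ g b = 1 := by
  classical
  have key : ∑ u ∈ s, g u = (s.filter fun u => g u = 1).card := by
    rw [Finset.card_eq_sum_ones,
      ← Finset.sum_filter_add_sum_filter_not s (fun u => g u = 1)]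
    have h0 : ∑ u ∈ s.filter (fun u => ¬ g u = 1), g u = 0 :=
      Finset.sum_eq_zero fun u hu => by
        have := h1 u
        have := (Finset.mem_filter.mp hu).2
        omega
    rw [h0, add_zero]
    exact Finset.sum_congr rfl fun u hu => (Finset.mem_filter.mp hu).2
  rw [key] at h
  obtain ⟨a, b, ha, hb, hab⟩ := Finset.one_lt_card_iff.mp h
  exact ⟨a, (Finset.mem_filter.mp ha).1, b, (Finset.mem_filter.mp hb).1, hab,
    (Finset.mem_filter.mp ha).2, (Finset.mem_filter.mp hb).2⟩

/-- The optimal objective value of the DRDP-1 integer program equals the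
double Roman domination number. -/
theorem drdp1_eq_gammaDR {V : Type*} [Fintype V] (G : SimpleGraph V)
    [DecidableRel G.Adj] :
    sInf {w : ℕ | ∃ x y z : V → ℕ,
      (∀ v, x v ≤ 1) ∧ (∀ v, y v ≤ 1) ∧ (∀ v, z v ≤ 1) ∧
      (∀ v : V, (x v : ℝ) + (y v : ℝ) + (z v : ℝ)
        + (1 / 2) * ∑ u ∈ G.neighborFinset v, (y u : ℝ)
        + ∑ u ∈ G.neighborFinset v, (z u : ℝ) ≥ 1) ∧
      (∀ v : V, ∑ u ∈ G.neighborFinset v, (y u : ℝ)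
        + ∑ u ∈ G.neighborFinset v, (z u : ℝ) ≥ (x v : ℝ)) ∧
      (∀ v, x v + y v + z v ≤ 1) ∧
      w = ∑ v, x v + 2 * ∑ v, y v + 3 * ∑ v, z v} = gammaDR G := by
  classical
  unfold gammaDR
  congr 1
  ext w
  simp only [Set.mem_setOf_eq]
  constructor
  · -- IP feasible point gives a DRDF
    rintro ⟨x, y, z, hx, hy, hz, hc1, hc2, hc3, hw⟩
    refine ⟨fun v => x v + 2 * y v + 3 * z v, ⟨fun v => ?_, fun v hv => ?_, fun v hv => ?_⟩, ?_⟩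
    · show x v + 2 * y v + 3 * z v ≤ 3
      have := hx v; have := hy v; have := hz v; have := hc3 v; omega
    · -- f v = 0
      have hv' : x v + 2 * y v + 3 * z v = 0 := hv
      have hx0 : x v = 0 ∧ y v = 0 ∧ z v = 0 := by omega
      have h1 := hc1 v
      rw [hx0.1, hx0.2.1, hx0.2.2] at h1
      push_cast at h1
      rw [← Nat.cast_sum, ← Nat.cast_sum] at h1
      have h2 : (2 : ℝ) ≤ ((∑ u ∈ G.neighborFinset v, y u : ℕ) : ℝ)
          + 2 * ((∑ u ∈ G.neighborFinset v, z u : ℕ) : ℝ) := by linarith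
      have h3 : 2 ≤ (∑ u ∈ G.neighborFinset v, y u)
          + 2 * (∑ u ∈ G.neighborFinset v, z u) := by exact_mod_cast h2
      by_cases hZ : ∑ u ∈ G.neighborFinset v, z u = 0
      · have hY2 : 2 ≤ ∑ u ∈ G.neighborFinset v, y u := by omega
        obtain ⟨a, ha, b, hb, hab, hga, hgb⟩ := exists_pair_of_two_le_sum hy hY2
        rw [SimpleGraph.mem_neighborFinset] at ha hb
        left
        refine ⟨a, b, hab, ha, hb, ?_, ?_⟩
        · show x a + 2 * y a + 3 * z a = 2
          have := hc3 a; have := hz a; omega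
        · show x b + 2 * y b + 3 * z b = 2
          have := hc3 b; have := hz b; omega
      · obtain ⟨u, hu, hzu⟩ := Finset.exists_ne_zero_of_sum_ne_zero hZ
        rw [SimpleGraph.mem_neighborFinset] at hu
        right
        refine ⟨u, hu, ?_⟩
        show x u + 2 * y u + 3 * z u = 3
        have := hc3 u; have := hz u; omega
    · -- f v = 1
      have hv' : x v + 2 * y v + 3 * z v = 1 := hv
      have hx1 : x v = 1 := by have := hy v; have := hz v; omega
      have h1 := hc2 v
      rw [hx1] at h1
      push_cast at h1
      rw [← Nat.cast_sum, ← Nat.cast_sum] at h1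
      have h2 : (1 : ℝ) ≤ ((∑ u ∈ G.neighborFinset v, y u : ℕ) : ℝ)
          + ((∑ u ∈ G.neighborFinset v, z u : ℕ) : ℝ) := by linarith
      have h3 : 1 ≤ (∑ u ∈ G.neighborFinset v, y u)
          + (∑ u ∈ G.neighborFinset v, z u) := by exact_mod_cast h2
      rw [← Finset.sum_add_distrib] at h3
      have hne : ∑ u ∈ G.neighborFinset v, (y u + z u) ≠ 0 := by omega
      obtain ⟨u, hu, huv⟩ := Finset.exists_ne_zero_of_sum_ne_zero hne
      rw [SimpleGraph.mem_neighborFinset] at hu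
      refine ⟨u, hu, ?_⟩
      show 2 ≤ x u + 2 * y u + 3 * z u
      omega
    · rw [hw]
      simp [Finset.sum_add_distrib, Finset.mul_sum]
  · -- DRDF gives an IP feasible point
    rintro ⟨f, ⟨hf3, hf0, hf1⟩, hw⟩
    refine ⟨fun v => if f v = 1 then 1 else 0, fun v => if f v = 2 then 1 else 0,
      fun v => if f v = 3 then 1 else 0,
      fun v => by show (if f v = 1 then 1 else 0 : ℕ) ≤ 1; split_ifs <;> omega,
      fun v => by show (if f v = 2 then 1 else 0 : ℕ) ≤ 1; split_ifs <;> omega,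
      fun v => by show (if f v = 3 then 1 else 0 : ℕ) ≤ 1; split_ifs <;> omega,
      fun v => ?_, fun v => ?_,
      fun v => by
        show (if f v = 1 then 1 else 0 : ℕ) + (if f v = 2 then 1 else 0)
          + (if f v = 3 then 1 else 0) ≤ 1
        split_ifs <;> omega, ?_⟩
    · -- constraint (i)
      show ((if f v = 1 then 1 else 0 : ℕ) : ℝ) + ((if f v = 2 then 1 else 0 : ℕ) : ℝ)
          + ((if f v = 3 then 1 else 0 : ℕ) : ℝ)
          + (1 / 2) * ∑ u ∈ G.neighborFinset v, ((if f u = 2 then 1 else 0 : ℕ) : ℝ)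
          + ∑ u ∈ G.neighborFinset v, ((if f u = 3 then 1 else 0 : ℕ) : ℝ) ≥ 1
      have hYnn : (0 : ℝ) ≤ ∑ u ∈ G.neighborFinset v,
          ((if f u = 2 then 1 else 0 : ℕ) : ℝ) :=
        Finset.sum_nonneg fun u _ => Nat.cast_nonneg _
      have hZnn : (0 : ℝ) ≤ ∑ u ∈ G.neighborFinset v,
          ((if f u = 3 then 1 else 0 : ℕ) : ℝ) :=
        Finset.sum_nonneg fun u _ => Nat.cast_nonneg _
      by_cases h0 : f v = 0
      · have e1 : ((if f v = 1 then 1 else 0 : ℕ) : ℝ) = 0 := by simp [h0]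
        have e2 : ((if f v = 2 then 1 else 0 : ℕ) : ℝ) = 0 := by simp [h0]
        have e3 : ((if f v = 3 then 1 else 0 : ℕ) : ℝ) = 0 := by simp [h0]
        rw [e1, e2, e3]
        rcases hf0 v h0 with ⟨u₁, u₂, hne, ha1, ha2, hb1, hb2⟩ | ⟨u, hau, hfu⟩
        · have hsub : ({u₁, u₂} : Finset V) ⊆ G.neighborFinset v := by
            intro t ht
            rw [Finset.mem_insert, Finset.mem_singleton] at ht
            rw [SimpleGraph.mem_neighborFinset]
            rcases ht with rfl | rfl
            · exact ha1
            · exact ha2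
          have h2 : 2 ≤ ∑ u ∈ G.neighborFinset v, (if f u = 2 then 1 else 0 : ℕ) := by
            calc 2 = ∑ u ∈ ({u₁, u₂} : Finset V), (if f u = 2 then 1 else 0 : ℕ) := by
                  rw [Finset.sum_pair hne]; simp [hb1, hb2]
              _ ≤ _ := Finset.sum_le_sum_of_subset hsub
          have h2' : (2 : ℝ) ≤ ∑ u ∈ G.neighborFinset v,
              ((if f u = 2 then 1 else 0 : ℕ) : ℝ) := by
            rw [← Nat.cast_sum]; exact_mod_cast h2
          linarith
        · have h2 : 1 ≤ ∑ u ∈ G.neighborFinset v, (if f u = 3 then 1 else 0 : ℕ) := by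
            have := Finset.single_le_sum (f := fun u => (if f u = 3 then 1 else 0 : ℕ))
              (fun i _ => Nat.zero_le _) ((G.mem_neighborFinset v u).mpr hau)
            simpa [hfu] using this
          have h2' : (1 : ℝ) ≤ ∑ u ∈ G.neighborFinset v,
              ((if f u = 3 then 1 else 0 : ℕ) : ℝ) := by
            rw [← Nat.cast_sum]; exact_mod_cast h2
          linarith
      · have hn : (if f v = 1 then 1 else 0 : ℕ) + (if f v = 2 then 1 else 0)
            + (if f v = 3 then 1 else 0) = 1 := by
          have := hf3 v; split_ifs <;> omega
        have hone' : ((if f v = 1 then 1 else 0 : ℕ) : ℝ)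
            + ((if f v = 2 then 1 else 0 : ℕ) : ℝ)
            + ((if f v = 3 then 1 else 0 : ℕ) : ℝ) = 1 := by exact_mod_cast hn
        linarith
    · -- constraint (ii)
      show ∑ u ∈ G.neighborFinset v, ((if f u = 2 then 1 else 0 : ℕ) : ℝ)
          + ∑ u ∈ G.neighborFinset v, ((if f u = 3 then 1 else 0 : ℕ) : ℝ)
          ≥ ((if f v = 1 then 1 else 0 : ℕ) : ℝ)
      have hYnn : (0 : ℝ) ≤ ∑ u ∈ G.neighborFinset v,
          ((if f u = 2 then 1 else 0 : ℕ) : ℝ) :=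
        Finset.sum_nonneg fun u _ => Nat.cast_nonneg _
      have hZnn : (0 : ℝ) ≤ ∑ u ∈ G.neighborFinset v,
          ((if f u = 3 then 1 else 0 : ℕ) : ℝ) :=
        Finset.sum_nonneg fun u _ => Nat.cast_nonneg _
      by_cases h1 : f v = 1
      · have e1 : ((if f v = 1 then 1 else 0 : ℕ) : ℝ) = 1 := by simp [h1]
        rw [e1]
        obtain ⟨u, hadj, hfu⟩ := hf1 v h1
        have hu23 : f u = 2 ∨ f u = 3 := by have := hf3 u; omega
        have hmem := (G.mem_neighborFinset v u).mpr hadj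
        rcases hu23 with h | h
        · have h2 : 1 ≤ ∑ u ∈ G.neighborFinset v, (if f u = 2 then 1 else 0 : ℕ) := by
            have := Finset.single_le_sum (f := fun u => (if f u = 2 then 1 else 0 : ℕ))
              (fun i _ => Nat.zero_le _) hmem
            simpa [h] using this
          have h2' : (1 : ℝ) ≤ ∑ u ∈ G.neighborFinset v,
              ((if f u = 2 then 1 else 0 : ℕ) : ℝ) := by
            rw [← Nat.cast_sum]; exact_mod_cast h2
          linarith
        · have h2 : 1 ≤ ∑ u ∈ G.neighborFinset v, (if f u = 3 then 1 else 0 : ℕ) := by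
            have := Finset.single_le_sum (f := fun u => (if f u = 3 then 1 else 0 : ℕ))
              (fun i _ => Nat.zero_le _) hmem
            simpa [h] using this
          have h2' : (1 : ℝ) ≤ ∑ u ∈ G.neighborFinset v,
              ((if f u = 3 then 1 else 0 : ℕ) : ℝ) := by
            rw [← Nat.cast_sum]; exact_mod_cast h2
          linarith
      · have e1 : ((if f v = 1 then 1 else 0 : ℕ) : ℝ) = 0 := by simp [h1]
        rw [e1]
        linarith
    · -- weight
      rw [hw]
      have hfv : ∀ v, f v = (if f v = 1 then 1 else 0) + 2 * (if f v = 2 then 1 else 0)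
          + 3 * (if f v = 3 then 1 else 0) := fun v => by
        have := hf3 v; split_ifs <;> omega
      rw [Finset.sum_congr rfl fun v _ => hfv v, Finset.sum_add_distrib,
        Finset.sum_add_distrib, ← Finset.mul_sum, ← Finset.mul_sum]
end

section
/- Let G = (V,E) be a finite simple graph. Consider the integer program DRDP-2: minimize Σ_{v∈V} p_v + Σ_{v∈V} q_v + Σ_{v∈V} r_v over functions p, q, r : V → {0,1} subject to, for every v ∈ V: (i) p_v + (1/2)Σ_{u∈N(v)} q_u + (1/2)Σ_{u∈N(v)} r_u ≥ 1; (ii) q_v + Σ_{u∈N(v)} q_u ≥ p_v; (iii) r_v ≤ q_v ≤ p_v. Then the optimal (minimum) objective value of DRDP-2 equals the double Roman domination number γ_dR(G). -/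
open Finset

lemma real_nat_ineq (a b c : ℕ) :
    ((a : ℝ) + (1 / 2) * (b : ℝ) + (1 / 2) * (c : ℝ) ≥ 1) ↔ 2 ≤ 2 * a + b + c := by
  constructor
  · intro h
    have h2 : (2 : ℝ) ≤ 2 * (a : ℕ) + (b : ℕ) + (c : ℕ) := by linarith
    exact_mod_cast h2
  · intro h
    have h2 : (2 : ℝ) ≤ 2 * (a : ℕ) + (b : ℕ) + (c : ℕ) := by exact_mod_cast h
    push_cast at h2
    linarith

/-- Real-form constraint (i) is equivalent to its natural-number form. -/
lemma constraint_i_iff {V : Type*} [Fintype V] (G : SimpleGraph V)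
    [DecidableRel G.Adj] (p q r : V → ℕ) (v : V) :
    ((p v : ℝ) + (1 / 2) * ∑ u ∈ G.neighborFinset v, (q u : ℝ)
      + (1 / 2) * ∑ u ∈ G.neighborFinset v, (r u : ℝ) ≥ 1) ↔
    2 ≤ 2 * p v + (∑ u ∈ G.neighborFinset v, q u) + ∑ u ∈ G.neighborFinset v, r u := by
  rw [← real_nat_ineq]
  push_cast
  rfl

/-- The optimal objective value of the DRDP-2 integer program equals the
double Roman domination number. -/
theorem drdp2_eq_gammaDR {V : Type*} [Fintype V] (G : SimpleGraph V)
    [DecidableRel G.Adj] :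
    sInf {w : ℕ | ∃ p q r : V → ℕ,
      (∀ v, p v ≤ 1) ∧ (∀ v, q v ≤ 1) ∧ (∀ v, r v ≤ 1) ∧
      (∀ v : V, (p v : ℝ)
        + (1 / 2) * ∑ u ∈ G.neighborFinset v, (q u : ℝ)
        + (1 / 2) * ∑ u ∈ G.neighborFinset v, (r u : ℝ) ≥ 1) ∧
      (∀ v : V, q v + ∑ u ∈ G.neighborFinset v, q u ≥ p v) ∧
      (∀ v, r v ≤ q v) ∧ (∀ v, q v ≤ p v) ∧
      w = ∑ v, p v + ∑ v, q v + ∑ v, r v} = gammaDR G := by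
  classical
  unfold gammaDR
  congr 1
  ext w
  simp only [Set.mem_setOf_eq]
  constructor
  · rintro ⟨p, q, r, hp, hq, hr, h1, h2, hrq, hqp, hw⟩
    refine ⟨fun v => p v + q v + r v, ⟨?_, ?_, ?_⟩, ?_⟩
    · intro v; beta_reduce; have := hp v; have := hq v; have := hr v; omega
    · intro v hv
      beta_reduce at hv ⊢
      have hpv : p v = 0 := by omega
      have h1v := (constraint_i_iff G p q r v).mp (h1 v)
      rw [hpv] at h1v
      by_cases hex : ∃ u ∈ G.neighborFinset v, r u = 1
      · obtain ⟨u, hu, hru⟩ := hex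
        have hqu : q u = 1 := by have := hrq u; have := hq u; omega
        have hpu : p u = 1 := by have := hqp u; have := hp u; omega
        right
        refine ⟨u, (SimpleGraph.mem_neighborFinset G v u).mp hu, ?_⟩
        beta_reduce; omega
      · push_neg at hex
        have hr0 : ∀ u ∈ G.neighborFinset v, r u = 0 := by
          intro u hu; have := hex u hu; have := hr u; omega
        have hrsum : ∑ u ∈ G.neighborFinset v, r u = 0 :=
          Finset.sum_eq_zero hr0
        have hqsum : 2 ≤ ∑ u ∈ G.neighborFinset v, q u := by omega
        have hcard : 1 < ((G.neighborFinset v).filter (fun u => q u = 1)).card := by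
          have : ∑ u ∈ G.neighborFinset v, q u
              = ∑ u ∈ G.neighborFinset v, (if q u = 1 then 1 else 0) := by
            apply Finset.sum_congr rfl
            intro u hu; have := hq u; split_ifs with h <;> omega
          rw [this, ← Finset.card_filter] at hqsum
          omega
        obtain ⟨u₁, hu₁, u₂, hu₂, hne⟩ := Finset.one_lt_card.mp hcard
        simp only [Finset.mem_filter] at hu₁ hu₂
        left
        refine ⟨u₁, u₂, hne, (SimpleGraph.mem_neighborFinset G v u₁).mp hu₁.1,
          (SimpleGraph.mem_neighborFinset G v u₂).mp hu₂.1, ?_, ?_⟩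
        · beta_reduce; have := hqp u₁; have := hp u₁; have := hr0 u₁ hu₁.1; omega
        · beta_reduce; have := hqp u₂; have := hp u₂; have := hr0 u₂ hu₂.1; omega
    · intro v hv
      beta_reduce at hv ⊢
      have hqv : q v = 0 := by have := hrq v; have := hqp v; omega
      have hpv : p v = 1 := by have := hrq v; have := hqp v; omega
      have h2v := h2 v
      rw [hqv, hpv] at h2v
      have : ∃ u ∈ G.neighborFinset v, q u ≠ 0 := by
        by_contra hc
        push_neg at hc
        have : ∑ u ∈ G.neighborFinset v, q u = 0 := Finset.sum_eq_zero hc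
        omega
      obtain ⟨u, hu, hqu⟩ := this
      have hpu : p u = 1 := by have := hqp u; have := hp u; have := hq u; omega
      refine ⟨u, (SimpleGraph.mem_neighborFinset G v u).mp hu, ?_⟩
      beta_reduce; omega
    · rw [hw, ← Finset.sum_add_distrib, ← Finset.sum_add_distrib]
  · rintro ⟨f, ⟨hf3, hf0, hf1⟩, hw⟩
    refine ⟨fun v => if 1 ≤ f v then 1 else 0, fun v => if 2 ≤ f v then 1 else 0,
      fun v => if 3 ≤ f v then 1 else 0, ?_, ?_, ?_, ?_, ?_, ?_, ?_, ?_⟩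
    · intro v; beta_reduce; split_ifs <;> omega
    · intro v; beta_reduce; split_ifs <;> omega
    · intro v; beta_reduce; split_ifs <;> omega
    · intro v
      refine (constraint_i_iff G (fun v => if 1 ≤ f v then 1 else 0)
        (fun v => if 2 ≤ f v then 1 else 0) (fun v => if 3 ≤ f v then 1 else 0) v).mpr ?_
      beta_reduce
      by_cases h : 1 ≤ f v
      · rw [if_pos h]; omega
      · have hfv : f v = 0 := by omega
        rw [if_neg h]
        rcases hf0 v hfv with ⟨u₁, u₂, hne, ha₁, ha₂, he₁, he₂⟩ | ⟨u, ha, he⟩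
        · have hq2 : 2 ≤ ∑ u ∈ G.neighborFinset v, (if 2 ≤ f u then 1 else 0) := by
            have hsub : {u₁, u₂} ⊆ G.neighborFinset v := by
              intro x hx
              simp only [Finset.mem_insert, Finset.mem_singleton] at hx
              rcases hx with rfl | rfl
              · exact (SimpleGraph.mem_neighborFinset G v x).mpr ha₁
              · exact (SimpleGraph.mem_neighborFinset G v x).mpr ha₂
            calc 2 = ∑ u ∈ ({u₁, u₂} : Finset V), (if 2 ≤ f u then 1 else 0) := by
                  rw [Finset.sum_pair hne, if_pos (by omega : 2 ≤ f u₁),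
                    if_pos (by omega : 2 ≤ f u₂)]
              _ ≤ _ := Finset.sum_le_sum_of_subset hsub
          omega
        · have hu : u ∈ G.neighborFinset v := (SimpleGraph.mem_neighborFinset G v u).mpr ha
          have hq1 : 1 ≤ ∑ x ∈ G.neighborFinset v, (if 2 ≤ f x then 1 else 0) := by
            have h2 := Finset.single_le_sum (f := fun x => if 2 ≤ f x then (1:ℕ) else 0)
              (fun i _ => Nat.zero_le _) hu
            beta_reduce at h2
            rw [if_pos (by omega : 2 ≤ f u)] at h2
            exact h2
          have hr1 : 1 ≤ ∑ x ∈ G.neighborFinset v, (if 3 ≤ f x then 1 else 0) := by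
            have h3 := Finset.single_le_sum (f := fun x => if 3 ≤ f x then (1:ℕ) else 0)
              (fun i _ => Nat.zero_le _) hu
            beta_reduce at h3
            rw [if_pos (by omega : 3 ≤ f u)] at h3
            exact h3
          omega
    · intro v
      beta_reduce
      by_cases h : 2 ≤ f v
      · simp only [if_pos h]; split_ifs <;> omega
      · by_cases h1 : 1 ≤ f v
        · have hfv : f v = 1 := by omega
          obtain ⟨u, ha, he⟩ := hf1 v hfv
          have hu : u ∈ G.neighborFinset v := (SimpleGraph.mem_neighborFinset G v u).mpr ha
          have := Finset.single_le_sum (f := fun x => if 2 ≤ f x then (1:ℕ) else 0)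
            (fun i _ => Nat.zero_le _) hu
          beta_reduce at this
          rw [if_pos he] at this
          simp only [if_pos h1, if_neg h, ge_iff_le]
          omega
        · simp only [if_neg h1]
          omega
    · intro v; beta_reduce; split_ifs <;> omega
    · intro v; beta_reduce; split_ifs <;> omega
    · rw [hw, ← Finset.sum_add_distrib, ← Finset.sum_add_distrib]
      apply Finset.sum_congr rfl
      intro v _
      beta_reduce
      have := hf3 v
      split_ifs <;> omega
end

section
/- Let G = (V,E) be a finite simple graph. Consider the integer program DRDP-1′: minimize 2Σ_{v∈V} y_v + 3Σ_{v∈V} z_v over functions y, z : V → {0,1} subject to, for every v ∈ V: (i) y_v + z_v + (1/2)Σ_{u∈N(v)} y_u + Σ_{u∈N(v)} z_u ≥ 1; (ii) y_v + z_v ≤ 1. Then the optimal (minimum) objective value of DRDP-1′ equals the double Roman domination number γ_dR(G). -/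
open Finset

section Aux

variable {V : Type*} [Fintype V] (G : SimpleGraph V) [DecidableRel G.Adj]

lemma prog_to_drdf (y z : V → ℕ) (hy : ∀ v, y v ≤ 1) (hz : ∀ v, z v ≤ 1)
    (hc : ∀ v : V, (y v : ℝ) + (z v : ℝ)
        + (1 / 2) * ∑ u ∈ G.neighborFinset v, (y u : ℝ)
        + ∑ u ∈ G.neighborFinset v, (z u : ℝ) ≥ 1)
    (hyz : ∀ v, y v + z v ≤ 1) :
    IsDRDF G (fun v => 2 * y v + 3 * z v) := by
  refine ⟨fun v => by have := hy v; have := hz v; have := hyz v; show 2 * y v + 3 * z v ≤ 3; omega, ?_, ?_⟩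
  · intro v hv
    simp only at hv
    have hyv : y v = 0 := by omega
    have hzv : z v = 0 := by omega
    by_cases hez : ∃ u, G.Adj v u ∧ z u = 1
    · obtain ⟨u, hu, hzu⟩ := hez
      right
      refine ⟨u, hu, ?_⟩
      have := hyz u
      simp only
      omega
    · push_neg at hez
      have hz0 : ∀ u ∈ G.neighborFinset v, z u = 0 := by
        intro u hu
        rw [SimpleGraph.mem_neighborFinset] at hu
        have h1 := hez u hu
        have h2 := hz u
        omega
      have hsz : ∑ u ∈ G.neighborFinset v, (z u : ℝ) = 0 := by
        apply Finset.sum_eq_zero; intro u hu; simp [hz0 u hu]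
      have h2 : (2:ℝ) ≤ ∑ u ∈ G.neighborFinset v, (y u : ℝ) := by
        have := hc v
        rw [hsz, hyv, hzv] at this
        push_cast at this
        linarith
      have h2' : 2 ≤ ∑ u ∈ G.neighborFinset v, y u := by
        exact_mod_cast h2
      have hsum : ∑ u ∈ G.neighborFinset v, y u
          = ((G.neighborFinset v).filter (fun u => y u = 1)).card := by
        rw [Finset.card_filter]
        apply Finset.sum_congr rfl
        intro u _
        have := hy u
        by_cases h : y u = 1
        · simp [h]
        · simp [h]; omega
      rw [hsum] at h2'
      obtain ⟨u₁, hu₁, u₂, hu₂, hne⟩ := Finset.one_lt_card.mp h2'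
      simp only [Finset.mem_filter, SimpleGraph.mem_neighborFinset] at hu₁ hu₂
      left
      refine ⟨u₁, u₂, hne, hu₁.1, hu₂.1, ?_, ?_⟩
      · have := hyz u₁; simp only; omega
      · have := hyz u₂; simp only; omega
  · intro v hv
    simp only at hv
    have := hy v; have := hz v
    omega

lemma drdf_to_prog (f : V → ℕ) (hf : IsDRDF G f) :
    ∃ y z : V → ℕ, (∀ v, y v ≤ 1) ∧ (∀ v, z v ≤ 1) ∧
      (∀ v : V, (y v : ℝ) + (z v : ℝ)
        + (1 / 2) * ∑ u ∈ G.neighborFinset v, (y u : ℝ)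
        + ∑ u ∈ G.neighborFinset v, (z u : ℝ) ≥ 1) ∧
      (∀ v, y v + z v ≤ 1) ∧
      2 * ∑ v, y v + 3 * ∑ v, z v ≤ ∑ v, f v := by
  classical
  obtain ⟨hf3, hf0, hf1⟩ := hf
  -- choice of witness for each 1-vertex
  have hch : ∀ v, ∃ u, f v = 1 → (G.Adj v u ∧ 2 ≤ f u) := by
    intro v
    by_cases h : f v = 1
    · obtain ⟨u, hu⟩ := hf1 v h
      exact ⟨u, fun _ => hu⟩
    · exact ⟨v, fun h' => absurd h' h⟩
  choose g hg using hch
  set ones : Finset V := univ.filter (fun v => f v = 1) with hones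
  set P : Finset V := ones.image g with hPdef
  have hPmem : ∀ u ∈ P, 2 ≤ f u := by
    intro u hu
    rw [hPdef, Finset.mem_image] at hu
    obtain ⟨v, hv, rfl⟩ := hu
    rw [hones, Finset.mem_filter] at hv
    exact (hg v hv.2).2
  set z : V → ℕ := fun v => if f v = 3 ∨ v ∈ P then 1 else 0 with hzdef'
  set y : V → ℕ := fun v => if f v = 2 ∧ v ∉ P then 1 else 0 with hydef'
  have hzdef : ∀ v, z v = if f v = 3 ∨ v ∈ P then 1 else 0 := fun v => rfl
  have hydef : ∀ v, y v = if f v = 2 ∧ v ∉ P then 1 else 0 := fun v => rfl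
  clear_value z y
  have hy1 : ∀ v, y v ≤ 1 := by intro v; rw [hydef v]; split <;> omega
  have hz1 : ∀ v, z v ≤ 1 := by intro v; rw [hzdef v]; split <;> omega
  have hyz : ∀ v, y v + z v ≤ 1 := by
    intro v
    rw [hydef v, hzdef v]
    split
    · rename_i h
      rw [if_neg]
      push_neg
      constructor
      · omega
      · exact h.2
    · split <;> omega
  refine ⟨y, z, hy1, hz1, ?_, hyz, ?_⟩
  · -- constraints
    intro v
    have hyn : ∀ u, (0:ℝ) ≤ (y u : ℝ) := fun u => Nat.cast_nonneg _
    have hzn : ∀ u, (0:ℝ) ≤ (z u : ℝ) := fun u => Nat.cast_nonneg _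
    have hsyn : (0:ℝ) ≤ ∑ u ∈ G.neighborFinset v, (y u : ℝ) :=
      Finset.sum_nonneg fun u _ => hyn u
    have hszn : (0:ℝ) ≤ ∑ u ∈ G.neighborFinset v, (z u : ℝ) :=
      Finset.sum_nonneg fun u _ => hzn u
    -- case analysis on f v
    by_cases h3 : f v = 3 ∨ v ∈ P
    · have : z v = 1 := by rw [hzdef v]; simp [h3]
      rw [this]
      push_cast
      linarith
    · push_neg at h3
      by_cases h2 : f v = 2
      · have : y v = 1 := by rw [hydef v]; simp [h2, h3.2]
        rw [this]
        push_cast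
        linarith
      · -- f v ∈ {0, 1}
        have hfv : f v = 0 ∨ f v = 1 := by
          have := hf3 v
          omega
        rcases hfv with hfv | hfv
        · rcases hf0 v hfv with ⟨u₁, u₂, hne, ha1, ha2, hfu1, hfu2⟩ | ⟨u, ha, hfu⟩
          · -- two neighbors with f = 2; each contributes ≥ 1/2
            have key : (1:ℝ) ≤ (1 / 2) * ∑ u ∈ G.neighborFinset v, (y u : ℝ)
                + ∑ u ∈ G.neighborFinset v, (z u : ℝ) := by
              have heq : (1 / 2 : ℝ) * ∑ u ∈ G.neighborFinset v, (y u : ℝ)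
                  + ∑ u ∈ G.neighborFinset v, (z u : ℝ)
                  = ∑ u ∈ G.neighborFinset v, ((1/2 : ℝ) * (y u : ℝ) + (z u : ℝ)) := by
                rw [Finset.sum_add_distrib, Finset.mul_sum]
              rw [heq]
              have hsub : ({u₁, u₂} : Finset V) ⊆ G.neighborFinset v := by
                intro x hx
                rw [Finset.mem_insert, Finset.mem_singleton] at hx
                rcases hx with rfl | rfl
                · exact (SimpleGraph.mem_neighborFinset _ _ _).mpr ha1
                · exact (SimpleGraph.mem_neighborFinset _ _ _).mpr ha2
              have hpair : ∑ u ∈ ({u₁, u₂} : Finset V), ((1/2 : ℝ) * (y u : ℝ) + (z u : ℝ))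
                  ≤ ∑ u ∈ G.neighborFinset v, ((1/2 : ℝ) * (y u : ℝ) + (z u : ℝ)) := by
                apply Finset.sum_le_sum_of_subset_of_nonneg hsub
                intro i _ _
                have := hyn i; have := hzn i
                linarith
              rw [Finset.sum_pair hne] at hpair
              have hc1 : (1/2:ℝ) ≤ (1/2 : ℝ) * (y u₁ : ℝ) + (z u₁ : ℝ) := by
                by_cases hp : u₁ ∈ P
                · have : z u₁ = 1 := by rw [hzdef u₁]; simp [hp]
                  rw [this]
                  have := hyn u₁
                  push_cast
                  linarith
                · have : y u₁ = 1 := by rw [hydef u₁]; simp [hfu1, hp]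
                  rw [this]
                  have := hzn u₁
                  push_cast
                  linarith
              have hc2 : (1/2:ℝ) ≤ (1/2 : ℝ) * (y u₂ : ℝ) + (z u₂ : ℝ) := by
                by_cases hp : u₂ ∈ P
                · have : z u₂ = 1 := by rw [hzdef u₂]; simp [hp]
                  rw [this]
                  have := hyn u₂
                  push_cast
                  linarith
                · have : y u₂ = 1 := by rw [hydef u₂]; simp [hfu2, hp]
                  rw [this]
                  have := hzn u₂
                  push_cast
                  linarith
              linarith
            have := hyn v; have := hzn v
            linarith
          · -- neighbor with f = 3
            have hzu : z u = 1 := by rw [hzdef u]; simp [hfu]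
            have : (1:ℝ) ≤ ∑ w ∈ G.neighborFinset v, (z w : ℝ) := by
              have hm : u ∈ G.neighborFinset v := (SimpleGraph.mem_neighborFinset _ _ _).mpr ha
              calc (1:ℝ) = (z u : ℝ) := by rw [hzu]; norm_num
                _ ≤ ∑ w ∈ G.neighborFinset v, (z w : ℝ) :=
                    Finset.single_le_sum (fun i _ => hzn i) hm
            have := hyn v; have := hzn v
            linarith
        · -- f v = 1 : g v ∈ P with z = 1
          have hgv := hg v hfv
          have hgP : g v ∈ P := by
            rw [hPdef, Finset.mem_image]
            exact ⟨v, by rw [hones, Finset.mem_filter]; exact ⟨Finset.mem_univ v, hfv⟩, rfl⟩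
          have hzu : z (g v) = 1 := by rw [hzdef (g v)]; simp [hgP]
          have hm : g v ∈ G.neighborFinset v :=
            (SimpleGraph.mem_neighborFinset _ _ _).mpr hgv.1
          have : (1:ℝ) ≤ ∑ w ∈ G.neighborFinset v, (z w : ℝ) := by
            calc (1:ℝ) = (z (g v) : ℝ) := by rw [hzu]; norm_num
              _ ≤ ∑ w ∈ G.neighborFinset v, (z w : ℝ) :=
                  Finset.single_le_sum (fun i _ => hzn i) hm
          have := hyn v; have := hzn v
          linarith
  · -- weight bound
    have hw : 2 * ∑ v, y v + 3 * ∑ v, z v = ∑ v, (2 * y v + 3 * z v) := by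
      rw [Finset.sum_add_distrib, Finset.mul_sum, Finset.mul_sum]
    rw [hw]
    have hsplit : ∑ v, (2 * y v + 3 * z v)
        = ∑ v ∈ ones, (2 * y v + 3 * z v) + ∑ v ∈ univ.filter (fun v => ¬ f v = 1), (2 * y v + 3 * z v) := by
      rw [hones]
      exact (Finset.sum_filter_add_sum_filter_not univ _ _).symm
    have hones0 : ∑ v ∈ ones, (2 * y v + 3 * z v) = 0 := by
      apply Finset.sum_eq_zero
      intro v hv
      rw [hones, Finset.mem_filter] at hv
      have hvP : v ∉ P := fun h => by have := hPmem v h; omega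
      have hy0 : y v = 0 := by rw [hydef v]; simp; omega
      have hz0 : z v = 0 := by
        rw [hzdef v]
        rw [if_neg]
        push_neg
        exact ⟨by omega, hvP⟩
      omega
    have hrest : ∑ v ∈ univ.filter (fun v => ¬ f v = 1), (2 * y v + 3 * z v)
        ≤ ∑ v ∈ univ.filter (fun v => ¬ f v = 1), (f v + if v ∈ P then 1 else 0) := by
      apply Finset.sum_le_sum
      intro v hv
      rw [Finset.mem_filter] at hv
      rw [hydef v, hzdef v]
      have h3 := hf3 v
      by_cases hp : v ∈ P
      · have h2 := hPmem v hp
        simp only [hp, not_true, if_true, or_true, and_false, if_false, and_not_self]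
        omega
      · simp only [hp, or_false, not_false_iff, and_true, if_false]
        by_cases h2 : f v = 2
        · simp [h2]
        · by_cases h33 : f v = 3
          · simp [h33, h2]
          · rw [if_neg h2, if_neg h33]
            omega
    have hPsum : ∑ v ∈ univ.filter (fun v => ¬ f v = 1), (if v ∈ P then 1 else 0) ≤ ones.card := by
      calc ∑ v ∈ univ.filter (fun v => ¬ f v = 1), (if v ∈ P then 1 else 0)
          ≤ ∑ v ∈ univ, (if v ∈ P then 1 else 0) := by
            apply Finset.sum_le_sum_of_subset_of_nonneg (Finset.filter_subset _ _)
            intro i _ _; split <;> omega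
        _ = P.card := by rw [Finset.sum_boole]; simp
        _ ≤ ones.card := Finset.card_image_le
    have honesf : ones.card = ∑ v ∈ ones, f v := by
      rw [Finset.card_eq_sum_ones]
      apply Finset.sum_congr rfl
      intro v hv
      rw [hones, Finset.mem_filter] at hv
      omega
    calc ∑ v, (2 * y v + 3 * z v)
        = ∑ v ∈ ones, (2 * y v + 3 * z v) + ∑ v ∈ univ.filter (fun v => ¬ f v = 1), (2 * y v + 3 * z v) := hsplit
      _ = ∑ v ∈ univ.filter (fun v => ¬ f v = 1), (2 * y v + 3 * z v) := by rw [hones0]; omega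
      _ ≤ ∑ v ∈ univ.filter (fun v => ¬ f v = 1), (f v + if v ∈ P then 1 else 0) := hrest
      _ = ∑ v ∈ univ.filter (fun v => ¬ f v = 1), f v + ∑ v ∈ univ.filter (fun v => ¬ f v = 1), (if v ∈ P then 1 else 0) := Finset.sum_add_distrib
      _ ≤ ∑ v ∈ univ.filter (fun v => ¬ f v = 1), f v + ones.card := by omega
      _ = ∑ v ∈ univ.filter (fun v => ¬ f v = 1), f v + ∑ v ∈ ones, f v := by rw [honesf]
      _ = ∑ v ∈ ones, f v + ∑ v ∈ univ.filter (fun v => ¬ f v = 1), f v := by omega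
      _ = ∑ v, f v := by rw [hones]; exact Finset.sum_filter_add_sum_filter_not univ _ _

end Aux

/-- The optimal objective value of the DRDP-1′ integer program equals the
double Roman domination number. -/
theorem drdp1'_eq_gammaDR {V : Type*} [Fintype V] (G : SimpleGraph V)
    [DecidableRel G.Adj] :
    sInf {w : ℕ | ∃ y z : V → ℕ,
      (∀ v, y v ≤ 1) ∧ (∀ v, z v ≤ 1) ∧
      (∀ v : V, (y v : ℝ) + (z v : ℝ)
        + (1 / 2) * ∑ u ∈ G.neighborFinset v, (y u : ℝ)
        + ∑ u ∈ G.neighborFinset v, (z u : ℝ) ≥ 1) ∧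
      (∀ v, y v + z v ≤ 1) ∧
      w = 2 * ∑ v, y v + 3 * ∑ v, z v} = gammaDR G := by
  have hBne : {w : ℕ | ∃ f : V → ℕ, IsDRDF G f ∧ w = ∑ v, f v}.Nonempty := by
    refine ⟨∑ v : V, 3, fun _ => 3, ⟨fun v => le_refl 3, fun v h => by simp at h, fun v h => by simp at h⟩, rfl⟩
  have hAne : {w : ℕ | ∃ y z : V → ℕ,
      (∀ v, y v ≤ 1) ∧ (∀ v, z v ≤ 1) ∧
      (∀ v : V, (y v : ℝ) + (z v : ℝ)
        + (1 / 2) * ∑ u ∈ G.neighborFinset v, (y u : ℝ)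
        + ∑ u ∈ G.neighborFinset v, (z u : ℝ) ≥ 1) ∧
      (∀ v, y v + z v ≤ 1) ∧
      w = 2 * ∑ v, y v + 3 * ∑ v, z v}.Nonempty := by
    refine ⟨2 * ∑ v : V, 0 + 3 * ∑ v : V, 1, fun _ => 0, fun _ => 1,
      fun v => Nat.zero_le 1, fun v => le_refl 1, ?_, fun v => le_refl 1, rfl⟩
    intro v
    have h1 : (0:ℝ) ≤ ∑ u ∈ G.neighborFinset v, ((0:ℕ) : ℝ) := by positivity
    have h2 : (0:ℝ) ≤ ∑ u ∈ G.neighborFinset v, ((1:ℕ) : ℝ) := by positivity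
    push_cast
    push_cast at h1 h2
    linarith
  apply le_antisymm
  · -- sInf A ≤ gammaDR
    obtain ⟨f, hf, heq⟩ := Nat.sInf_mem hBne
    obtain ⟨y, z, hy, hz, hc, hyz, hw⟩ := drdf_to_prog G f hf
    have hmem : 2 * ∑ v, y v + 3 * ∑ v, z v ∈ {w : ℕ | ∃ y z : V → ℕ,
      (∀ v, y v ≤ 1) ∧ (∀ v, z v ≤ 1) ∧
      (∀ v : V, (y v : ℝ) + (z v : ℝ)
        + (1 / 2) * ∑ u ∈ G.neighborFinset v, (y u : ℝ)
        + ∑ u ∈ G.neighborFinset v, (z u : ℝ) ≥ 1) ∧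
      (∀ v, y v + z v ≤ 1) ∧
      w = 2 * ∑ v, y v + 3 * ∑ v, z v} := ⟨y, z, hy, hz, hc, hyz, rfl⟩
    calc sInf _ ≤ 2 * ∑ v, y v + 3 * ∑ v, z v := Nat.sInf_le hmem
      _ ≤ ∑ v, f v := hw
      _ = gammaDR G := heq.symm
  · -- gammaDR ≤ sInf A
    obtain ⟨y, z, hy, hz, hc, hyz, hw⟩ := Nat.sInf_mem hAne
    have hdr := prog_to_drdf G y z hy hz hc hyz
    have hsum : ∑ v, (2 * y v + 3 * z v) = 2 * ∑ v, y v + 3 * ∑ v, z v := by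
      rw [Finset.sum_add_distrib, Finset.mul_sum, Finset.mul_sum]
    apply Nat.sInf_le
    exact ⟨fun v => 2 * y v + 3 * z v, hdr, by rw [hsum, ← hw]⟩
end

section
/- Let G = (V,E) be a finite simple graph. Consider the integer program DRDP-2′: minimize 2Σ_{v∈V} q_v + Σ_{v∈V} r_v over functions q, r : V → {0,1} subject to, for every v ∈ V: (i) q_v + (1/2)Σ_{u∈N(v)} q_u + (1/2)Σ_{u∈N(v)} r_u ≥ 1; (ii) r_v ≤ q_v. Then the optimal (minimum) objective value of DRDP-2′ equals the double Roman domination number γ_dR(G). -/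
open Finset

/-- From any DRDF we can get one with no vertex assigned 1, of no larger weight. -/
lemma drdf_no_ones_aux {V : Type*} [Fintype V] (G : SimpleGraph V) [DecidableRel G.Adj] :
    ∀ n (f : V → ℕ), (univ.filter (fun v => f v = 1)).card ≤ n → IsDRDF G f →
      ∃ g : V → ℕ, IsDRDF G g ∧ (∀ v, g v ≠ 1) ∧ ∑ v, g v ≤ ∑ v, f v := by
  classical
  intro n
  induction n with
  | zero =>
    intro f hcard hf
    refine ⟨f, hf, fun v hv => ?_, le_rfl⟩
    have : v ∈ univ.filter (fun v => f v = 1) := by simp [hv]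
    have := Finset.card_pos.mpr ⟨v, this⟩
    omega
  | succ n ih =>
    intro f hcard hf
    by_cases hone : ∃ v, f v = 1
    · obtain ⟨v, hv⟩ := hone
      obtain ⟨u, hadj, hu2⟩ := hf.2.2 v hv
      have hvu : v ≠ u := G.ne_of_adj hadj
      set g : V → ℕ := fun x => if x = u then 3 else if x = v then 0 else f x with hg
      have hgu : g u = 3 := by simp [hg]
      have hgv : g v = 0 := by simp [hg, hvu, hvu.symm]
      have hgx : ∀ x, x ≠ u → x ≠ v → g x = f x := by
        intro x h1 h2; simp [hg, h1, h2]
      have hfv1 : f v ≠ 2 := by omega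
      have hfv3 : f v ≠ 3 := by omega
      have hgdrdf : IsDRDF G g := by
        refine ⟨?_, ?_, ?_⟩
        · intro x
          by_cases h1 : x = u
          · simp [h1, hgu]
          · by_cases h2 : x = v
            · simp [h2, hgv]
            · rw [hgx x h1 h2]; exact hf.1 x
        · intro x hx
          by_cases h1 : x = u
          · rw [h1, hgu] at hx; omega
          by_cases h2 : x = v
          · exact Or.inr ⟨u, h2 ▸ hadj, hgu⟩
          rw [hgx x h1 h2] at hx
          rcases hf.2.1 x hx with ⟨u₁, u₂, hne, ha1, ha2, h21, h22⟩ | ⟨w, haw, hw3⟩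
          · by_cases hu1 : u₁ = u
            · exact Or.inr ⟨u, hu1 ▸ ha1, hgu⟩
            by_cases hu2' : u₂ = u
            · exact Or.inr ⟨u, hu2' ▸ ha2, hgu⟩
            have hn1 : u₁ ≠ v := by intro h; rw [h, hv] at h21; omega
            have hn2 : u₂ ≠ v := by intro h; rw [h, hv] at h22; omega
            exact Or.inl ⟨u₁, u₂, hne, ha1, ha2,
              (hgx u₁ hu1 hn1).trans h21, (hgx u₂ hu2' hn2).trans h22⟩
          · by_cases hwu : w = u
            · exact Or.inr ⟨u, hwu ▸ haw, hgu⟩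
            · have hwv : w ≠ v := by intro h; rw [h, hv] at hw3; omega
              exact Or.inr ⟨w, haw, (hgx w hwu hwv).trans hw3⟩
        · intro x hx
          have h1 : x ≠ u := by intro h; rw [h, hgu] at hx; omega
          have h2 : x ≠ v := by intro h; rw [h, hgv] at hx; omega
          rw [hgx x h1 h2] at hx
          obtain ⟨w, haw, hw2⟩ := hf.2.2 x hx
          by_cases hwu : w = u
          · exact ⟨w, haw, by rw [hwu, hgu]; omega⟩
          · have hwv : w ≠ v := by intro h; rw [h, hv] at hw2; omega
            exact ⟨w, haw, by rw [hgx w hwu hwv]; exact hw2⟩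
      -- sum bound
      have hsum : ∑ x, g x ≤ ∑ x, f x := by
        have huv : v ∈ univ.erase u := by simp [hvu]
        have e1 : ∑ x, g x = g u + (g v + ∑ x ∈ (univ.erase u).erase v, g x) := by
          rw [Finset.add_sum_erase _ g huv, Finset.add_sum_erase _ g (mem_univ u)]
        have e2 : ∑ x, f x = f u + (f v + ∑ x ∈ (univ.erase u).erase v, f x) := by
          rw [Finset.add_sum_erase _ f huv, Finset.add_sum_erase _ f (mem_univ u)]
        have e3 : ∑ x ∈ (univ.erase u).erase v, g x = ∑ x ∈ (univ.erase u).erase v, f x := by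
          apply Finset.sum_congr rfl
          intro x hx
          simp only [mem_erase] at hx
          exact hgx x hx.2.1 hx.1
        rw [e1, e2, e3, hgu, hgv, hv]
        omega
      -- card bound
      have hcard' : (univ.filter (fun x => g x = 1)).card ≤ n := by
        have hsub : univ.filter (fun x => g x = 1) ⊆ (univ.filter (fun x => f x = 1)).erase v := by
          intro x hx
          simp only [mem_filter, mem_univ, true_and] at hx
          have h1 : x ≠ u := by intro h; rw [h, hgu] at hx; omega
          have h2 : x ≠ v := by intro h; rw [h, hgv] at hx; omega
          rw [hgx x h1 h2] at hx
          simp [mem_erase, h2, hx]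
        have hvmem : v ∈ univ.filter (fun x => f x = 1) := by simp [hv]
        have := Finset.card_le_card hsub
        rw [Finset.card_erase_of_mem hvmem] at this
        omega
      obtain ⟨g', hg', hgo, hgs⟩ := ih g hcard' hgdrdf
      exact ⟨g', hg', hgo, hgs.trans hsum⟩
    · push_neg at hone
      exact ⟨f, hf, hone, le_rfl⟩

lemma drdf_no_ones {V : Type*} [Fintype V] (G : SimpleGraph V) [DecidableRel G.Adj]
    (f : V → ℕ) (hf : IsDRDF G f) :
    ∃ g : V → ℕ, IsDRDF G g ∧ (∀ v, g v ≠ 1) ∧ ∑ v, g v ≤ ∑ v, f v :=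
  drdf_no_ones_aux G _ f le_rfl hf

/-- The optimal objective value of the DRDP-2′ integer program equals the
double Roman domination number. -/
theorem drdp2'_eq_gammaDR {V : Type*} [Fintype V] (G : SimpleGraph V)
    [DecidableRel G.Adj] :
    sInf {w : ℕ | ∃ q r : V → ℕ,
      (∀ v, q v ≤ 1) ∧ (∀ v, r v ≤ 1) ∧
      (∀ v : V, (q v : ℝ)
        + (1 / 2) * ∑ u ∈ G.neighborFinset v, (q u : ℝ)
        + (1 / 2) * ∑ u ∈ G.neighborFinset v, (r u : ℝ) ≥ 1) ∧
      (∀ v, r v ≤ q v) ∧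
      w = 2 * ∑ v, q v + ∑ v, r v} = gammaDR G := by
  classical
  set A : Set ℕ := {w : ℕ | ∃ q r : V → ℕ,
      (∀ v, q v ≤ 1) ∧ (∀ v, r v ≤ 1) ∧
      (∀ v : V, (q v : ℝ)
        + (1 / 2) * ∑ u ∈ G.neighborFinset v, (q u : ℝ)
        + (1 / 2) * ∑ u ∈ G.neighborFinset v, (r u : ℝ) ≥ 1) ∧
      (∀ v, r v ≤ q v) ∧
      w = 2 * ∑ v, q v + ∑ v, r v} with hA
  set B : Set ℕ := {w : ℕ | ∃ f : V → ℕ, IsDRDF G f ∧ w = ∑ v, f v} with hB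
  have hAne : A.Nonempty := by
    refine ⟨2 * ∑ _v : V, 1 + ∑ _v : V, 1, fun _ => 1, fun _ => 1, fun _ => le_rfl,
      fun _ => le_rfl, ?_, fun _ => le_rfl, rfl⟩
    intro v
    have h1 : (0:ℝ) ≤ (1/2) * ∑ u ∈ G.neighborFinset v, ((1:ℕ):ℝ) := by positivity
    push_cast
    linarith
  have hBne : B.Nonempty := by
    refine ⟨∑ v : V, (fun _ => 3) v, fun _ => 3, ⟨fun _ => le_rfl, ?_, ?_⟩, rfl⟩
    · intro v hv; simp at hv
    · intro v hv; simp at hv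
  have hgB : gammaDR G = sInf B := rfl
  apply le_antisymm
  · -- sInf A ≤ gammaDR G
    obtain ⟨f, hf, hw⟩ := Nat.sInf_mem hBne
    obtain ⟨g, hg, hgo, hgs⟩ := drdf_no_ones G f hf
    set q : V → ℕ := fun v => if 2 ≤ g v then 1 else 0 with hq
    set r : V → ℕ := fun v => if g v = 3 then 1 else 0 with hr
    have hval : ∀ v, 2 * q v + r v = g v := by
      intro v
      have := hg.1 v
      have := hgo v
      simp only [hq, hr]
      split_ifs <;> omega
    have hmem : 2 * ∑ v, q v + ∑ v, r v ∈ A := by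
      refine ⟨q, r, fun v => by simp only [hq]; split_ifs <;> omega,
        fun v => by simp only [hr]; split_ifs <;> omega, ?_,
        fun v => by simp only [hq, hr]; split_ifs <;> omega, rfl⟩
      intro v
      have hqnn : (0:ℝ) ≤ ∑ u ∈ G.neighborFinset v, (q u : ℝ) :=
        Finset.sum_nonneg fun _ _ => Nat.cast_nonneg _
      have hrnn : (0:ℝ) ≤ ∑ u ∈ G.neighborFinset v, (r u : ℝ) :=
        Finset.sum_nonneg fun _ _ => Nat.cast_nonneg _
      by_cases h2 : 2 ≤ g v
      · have : q v = 1 := by simp [hq, h2]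
        rw [this]; push_cast; linarith
      · have hv0 : g v = 0 := by have := hgo v; omega
        rcases hg.2.1 v hv0 with ⟨u₁, u₂, hne, ha1, ha2, h21, h22⟩ | ⟨u, hau, hu3⟩
        · have hsub : {u₁, u₂} ⊆ G.neighborFinset v := by
            intro x hx
            simp only [mem_insert, mem_singleton] at hx
            rcases hx with h | h <;> subst h <;> simp [SimpleGraph.mem_neighborFinset, ha1, ha2]
          have hpair : ∑ u ∈ ({u₁, u₂} : Finset V), (q u : ℝ) = 2 := by
            rw [Finset.sum_pair hne]
            have e1 : q u₁ = 1 := by simp [hq, h21]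
            have e2 : q u₂ = 1 := by simp [hq, h22]
            rw [e1, e2]; norm_num
          have hge : (2:ℝ) ≤ ∑ u ∈ G.neighborFinset v, (q u : ℝ) := by
            rw [← hpair]
            exact Finset.sum_le_sum_of_subset_of_nonneg hsub
              (fun _ _ _ => Nat.cast_nonneg _)
          have : (0:ℝ) ≤ (q v : ℝ) := Nat.cast_nonneg _
          linarith
        · have hmemu : u ∈ G.neighborFinset v := by
            simp [SimpleGraph.mem_neighborFinset, hau]
          have eq1 : (1:ℝ) ≤ ∑ u' ∈ G.neighborFinset v, (q u' : ℝ) := by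
            have : q u = 1 := by simp [hq]; omega
            calc (1:ℝ) = (q u : ℝ) := by rw [this]; norm_num
            _ ≤ _ := Finset.single_le_sum (f := fun u => (q u : ℝ))
              (fun _ _ => Nat.cast_nonneg _) hmemu
          have er1 : (1:ℝ) ≤ ∑ u' ∈ G.neighborFinset v, (r u' : ℝ) := by
            have : r u = 1 := by simp [hr, hu3]
            calc (1:ℝ) = (r u : ℝ) := by rw [this]; norm_num
            _ ≤ _ := Finset.single_le_sum (f := fun u => (r u : ℝ))
              (fun _ _ => Nat.cast_nonneg _) hmemu
          have : (0:ℝ) ≤ (q v : ℝ) := Nat.cast_nonneg _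
          linarith
    have hobj : 2 * ∑ v, q v + ∑ v, r v ≤ gammaDR G := by
      have : 2 * ∑ v, q v + ∑ v, r v = ∑ v, g v := by
        rw [Finset.mul_sum, ← Finset.sum_add_distrib]
        exact Finset.sum_congr rfl fun v _ => hval v
      rw [this, hgB, hw]
      exact hgs
    exact le_trans (Nat.sInf_le hmem) hobj
  · -- gammaDR G ≤ sInf A
    obtain ⟨q, r, hq1, hr1, hcon, hrq, hw⟩ := Nat.sInf_mem hAne
    set f : V → ℕ := fun v => 2 * q v + r v with hf
    have hdrdf : IsDRDF G f := by
      refine ⟨fun v => by have := hq1 v; have := hr1 v; simp only [hf]; omega, ?_, ?_⟩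
      · intro v hv0
        have hqv : q v = 0 ∧ r v = 0 := by simp only [hf] at hv0; omega
        have hcv := hcon v
        rw [hqv.1] at hcv
        push_cast at hcv
        have hge2 : (2:ℝ) ≤ (∑ u ∈ G.neighborFinset v, (q u : ℝ))
            + ∑ u ∈ G.neighborFinset v, (r u : ℝ) := by linarith
        have hge2' : 2 ≤ (∑ u ∈ G.neighborFinset v, q u) + ∑ u ∈ G.neighborFinset v, r u := by
          have h := hge2
          have hc : ((∑ u ∈ G.neighborFinset v, q u : ℕ) : ℝ)
              + ((∑ u ∈ G.neighborFinset v, r u : ℕ) : ℝ) ≥ 2 := by push_cast; linarith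
          exact_mod_cast hc
        by_cases hex : ∃ u ∈ G.neighborFinset v, r u = 1
        · obtain ⟨u, hmemu, hru⟩ := hex
          have hqu : q u = 1 := by have := hrq u; have := hq1 u; omega
          refine Or.inr ⟨u, (SimpleGraph.mem_neighborFinset _ _ _).mp hmemu, ?_⟩
          simp only [hf]; omega
        · push_neg at hex
          have hr0 : ∀ u ∈ G.neighborFinset v, r u = 0 := by
            intro u hu; have := hr1 u; have := hex u hu; omega
          have hrs : ∑ u ∈ G.neighborFinset v, r u = 0 :=
            Finset.sum_eq_zero hr0
          have hqs : 2 ≤ ∑ u ∈ G.neighborFinset v, q u := by omega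
          have hfilt : ∑ u ∈ G.neighborFinset v, q u
              = ((G.neighborFinset v).filter (fun u => q u = 1)).card := by
            rw [← Finset.sum_filter_add_sum_filter_not (G.neighborFinset v) (fun u => q u = 1)]
            have e1 : ∑ u ∈ (G.neighborFinset v).filter (fun u => q u = 1), q u
                = ((G.neighborFinset v).filter (fun u => q u = 1)).card := by
              rw [Finset.card_eq_sum_ones]
              exact Finset.sum_congr rfl fun u hu => (mem_filter.mp hu).2
            have e2 : ∑ u ∈ (G.neighborFinset v).filter (fun u => ¬ q u = 1), q u = 0 := by
              apply Finset.sum_eq_zero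
              intro u hu
              have := hq1 u
              have := (mem_filter.mp hu).2
              omega
            omega
          rw [hfilt] at hqs
          obtain ⟨a, ha, b, hb, hab⟩ := Finset.one_lt_card.mp hqs
          simp only [mem_filter] at ha hb
          refine Or.inl ⟨a, b, hab, (SimpleGraph.mem_neighborFinset _ _ _).mp ha.1,
            (SimpleGraph.mem_neighborFinset _ _ _).mp hb.1, ?_, ?_⟩
          · have := hr0 a ha.1; simp only [hf]; omega
          · have := hr0 b hb.1; simp only [hf]; omega
      · intro v hv1
        exfalso
        have := hrq v
        have := hq1 v
        simp only [hf] at hv1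
        omega
    have hsum : ∑ v, f v = sInf A := by
      rw [hw]
      simp only [hf]
      rw [Finset.sum_add_distrib, Finset.mul_sum]
    rw [hgB]
    exact Nat.sInf_le ⟨f, hdrdf, hsum.symm⟩
end

section
/- Let G = (V,E) be a finite simple graph. Consider the two integer programs: DRDP-1′: minimize 2Σ_{v∈V} y_v + 3Σ_{v∈V} z_v over y, z : V → {0,1} subject to, for every v ∈ V, y_v + z_v + (1/2)Σ_{u∈N(v)} y_u + Σ_{u∈N(v)} z_u ≥ 1 and y_v + z_v ≤ 1; and DRDP-1″: the same minimization in which the constraints y_v + z_v ≤ 1 are omitted. Then the optimal (minimum) objective value of DRDP-1″ equals the optimal objective value of DRDP-1′. -/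
open Finset

/-- The optimal objective value of DRDP-1″ (DRDP-1′ without the constraints
`y_v + z_v ≤ 1`) equals the optimal objective value of DRDP-1′. -/
theorem drdp1''_eq_drdp1' {V : Type*} [Fintype V] (G : SimpleGraph V)
    [DecidableRel G.Adj] :
    sInf {w : ℕ | ∃ y z : V → ℕ,
      (∀ v, y v ≤ 1) ∧ (∀ v, z v ≤ 1) ∧
      (∀ v : V, (y v : ℝ) + (z v : ℝ)
        + (1 / 2) * ∑ u ∈ G.neighborFinset v, (y u : ℝ)
        + ∑ u ∈ G.neighborFinset v, (z u : ℝ) ≥ 1) ∧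
      w = 2 * ∑ v, y v + 3 * ∑ v, z v}
    =
    sInf {w : ℕ | ∃ y z : V → ℕ,
      (∀ v, y v ≤ 1) ∧ (∀ v, z v ≤ 1) ∧
      (∀ v : V, (y v : ℝ) + (z v : ℝ)
        + (1 / 2) * ∑ u ∈ G.neighborFinset v, (y u : ℝ)
        + ∑ u ∈ G.neighborFinset v, (z u : ℝ) ≥ 1) ∧
      (∀ v, y v + z v ≤ 1) ∧
      w = 2 * ∑ v, y v + 3 * ∑ v, z v} := by
  set S1 : Set ℕ := {w : ℕ | ∃ y z : V → ℕ,
      (∀ v, y v ≤ 1) ∧ (∀ v, z v ≤ 1) ∧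
      (∀ v : V, (y v : ℝ) + (z v : ℝ)
        + (1 / 2) * ∑ u ∈ G.neighborFinset v, (y u : ℝ)
        + ∑ u ∈ G.neighborFinset v, (z u : ℝ) ≥ 1) ∧
      w = 2 * ∑ v, y v + 3 * ∑ v, z v} with hS1
  set S2 : Set ℕ := {w : ℕ | ∃ y z : V → ℕ,
      (∀ v, y v ≤ 1) ∧ (∀ v, z v ≤ 1) ∧
      (∀ v : V, (y v : ℝ) + (z v : ℝ)
        + (1 / 2) * ∑ u ∈ G.neighborFinset v, (y u : ℝ)
        + ∑ u ∈ G.neighborFinset v, (z u : ℝ) ≥ 1) ∧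
      (∀ v, y v + z v ≤ 1) ∧
      w = 2 * ∑ v, y v + 3 * ∑ v, z v} with hS2
  have hfeas : ∀ v : V, ((0 : V → ℕ) v : ℝ) + ((fun _ => 1 : V → ℕ) v : ℝ)
        + (1 / 2) * ∑ u ∈ G.neighborFinset v, (((0 : V → ℕ)) u : ℝ)
        + ∑ u ∈ G.neighborFinset v, (((fun _ => 1 : V → ℕ)) u : ℝ) ≥ 1 := by
    intro v
    simp only [Pi.zero_apply, Nat.cast_zero, Nat.cast_one, Finset.sum_const,
      nsmul_eq_mul, smul_eq_mul, mul_one, mul_zero, add_zero, zero_add]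
    have : (0 : ℝ) ≤ (G.neighborFinset v).card := Nat.cast_nonneg _
    linarith
  have hS2ne : S2.Nonempty := by
    refine ⟨2 * ∑ v, (0 : V → ℕ) v + 3 * ∑ v, (fun _ => 1 : V → ℕ) v,
      (0 : V → ℕ), (fun _ => 1), fun v => by simp, fun v => le_refl 1, hfeas,
      fun v => by simp, rfl⟩
  have hS1ne : S1.Nonempty := by
    refine ⟨2 * ∑ v, (0 : V → ℕ) v + 3 * ∑ v, (fun _ => 1 : V → ℕ) v,
      (0 : V → ℕ), (fun _ => 1), fun v => by simp, fun v => le_refl 1, hfeas, rfl⟩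
  apply le_antisymm
  · -- S2 ⊆ S1, so sInf S1 ≤ sInf S2 via sInf S2 ∈ S2 ⊆ S1
    obtain ⟨y, z, hy, hz, hc, _, hw⟩ := Nat.sInf_mem hS2ne
    exact Nat.sInf_le ⟨y, z, hy, hz, hc, hw⟩
  · -- repair the optimal solution of S1
    obtain ⟨y, z, hy, hz, hc, hw⟩ := Nat.sInf_mem hS1ne
    set y' : V → ℕ := fun v => if z v = 1 then 0 else y v with hy'
    have hy'le : ∀ v, y' v ≤ y v := by
      intro v; simp only [hy']; split <;> omega
    have hnonneg : ∀ (f : V → ℕ) (s : Finset V), (0:ℝ) ≤ ∑ u ∈ s, (f u : ℝ) :=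
      fun f s => Finset.sum_nonneg fun _ _ => Nat.cast_nonneg _
    have hc' : ∀ v : V, (y' v : ℝ) + (z v : ℝ)
        + (1 / 2) * ∑ u ∈ G.neighborFinset v, (y' u : ℝ)
        + ∑ u ∈ G.neighborFinset v, (z u : ℝ) ≥ 1 := by
      intro v
      have h1 := hnonneg y' (G.neighborFinset v)
      have h2 := hnonneg z (G.neighborFinset v)
      have h3 : (0:ℝ) ≤ (y' v : ℝ) := Nat.cast_nonneg _
      by_cases hzv : z v = 1
      · rw [hzv]; push_cast; linarith
      · by_cases hex : ∃ u ∈ G.neighborFinset v, z u = 1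
        · obtain ⟨u0, hu0, hzu0⟩ := hex
          have hsum : (1:ℝ) ≤ ∑ u ∈ G.neighborFinset v, (z u : ℝ) := by
            have := Finset.single_le_sum (f := fun u => (z u : ℝ))
              (fun _ _ => Nat.cast_nonneg _) hu0
            simp only [hzu0, Nat.cast_one] at this; exact this
          have h4 : (0:ℝ) ≤ (z v : ℝ) := Nat.cast_nonneg _
          linarith
        · push_neg at hex
          have hz0 : ∀ u ∈ G.neighborFinset v, z u = 0 := by
            intro u hu; have := hz u; have := hex u hu; omega
          have hyv : y' v = y v := by simp only [hy', if_neg hzv]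
          have hsumy : ∑ u ∈ G.neighborFinset v, (y' u : ℝ)
              = ∑ u ∈ G.neighborFinset v, (y u : ℝ) := by
            refine Finset.sum_congr rfl fun u hu => ?_
            have hne : z u ≠ 1 := by rw [hz0 u hu]; omega
            simp only [hy', if_neg hne]
          rw [hyv, hsumy]
          exact hc v
    have hyz' : ∀ v, y' v + z v ≤ 1 := by
      intro v; simp only [hy']
      split
      · omega
      · have := hy v; have := hz v; omega
    have hobj : 2 * ∑ v, y' v + 3 * ∑ v, z v ≤ 2 * ∑ v, y v + 3 * ∑ v, z v := by
      have := Finset.sum_le_sum (s := Finset.univ) fun v _ => hy'le v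
      omega
    calc sInf S2 ≤ 2 * ∑ v, y' v + 3 * ∑ v, z v :=
          Nat.sInf_le ⟨y', z, fun v => le_trans (hy'le v) (hy v), hz, hc', hyz', rfl⟩
      _ ≤ 2 * ∑ v, y v + 3 * ∑ v, z v := hobj
      _ = sInf S1 := hw.symm
end

section
/- Let G = (V,E) be a finite simple graph. Consider the two programs: DRDP-2′: minimize 2Σ_{v∈V} q_v + Σ_{v∈V} r_v over q, r : V → {0,1} subject to, for every v ∈ V, q_v + (1/2)Σ_{u∈N(v)} q_u + (1/2)Σ_{u∈N(v)} r_u ≥ 1 and r_v ≤ q_v; and its mixed relaxation DRDP-2″: the same minimization where q : V → {0,1} remains binary but r : V → ℝ is only required to satisfy r_v ≥ 0 and r_v ≤ q_v for all v ∈ V, together with the constraints q_v + (1/2)Σ_{u∈N(v)} q_u + (1/2)Σ_{u∈N(v)} r_u ≥ 1 for all v ∈ V. Then the optimal (infimum) objective value of DRDP-2″ equals the optimal objective value of DRDP-2′. -/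
open Finset

/-- The optimal (infimum) objective value of the mixed relaxation DRDP-2″,
where the variables `r_v` are relaxed to nonnegative reals with `r_v ≤ q_v`,
equals the optimal objective value of the integer program DRDP-2′. -/
theorem drdp2''_eq_drdp2' {V : Type*} [Fintype V] (G : SimpleGraph V)
    [DecidableRel G.Adj] :
    sInf {w : ℝ | ∃ (q : V → ℕ) (r : V → ℝ),
      (∀ v, q v ≤ 1) ∧ (∀ v, 0 ≤ r v) ∧ (∀ v, r v ≤ (q v : ℝ)) ∧
      (∀ v : V, (q v : ℝ)
        + (1 / 2) * ∑ u ∈ G.neighborFinset v, (q u : ℝ)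
        + (1 / 2) * ∑ u ∈ G.neighborFinset v, r u ≥ 1) ∧
      w = 2 * ∑ v, (q v : ℝ) + ∑ v, r v}
    =
    (sInf {w : ℕ | ∃ q r : V → ℕ,
      (∀ v, q v ≤ 1) ∧ (∀ v, r v ≤ 1) ∧
      (∀ v : V, (q v : ℝ)
        + (1 / 2) * ∑ u ∈ G.neighborFinset v, (q u : ℝ)
        + (1 / 2) * ∑ u ∈ G.neighborFinset v, (r u : ℝ) ≥ 1) ∧
      (∀ v, r v ≤ q v) ∧
      w = 2 * ∑ v, q v + ∑ v, r v} : ℕ) := by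
  -- the nat set is nonempty
  have hconstr1 : ∀ v : V, (((1:ℕ)) : ℝ)
        + (1 / 2) * ∑ u ∈ G.neighborFinset v, (((fun _ : V => (1:ℕ)) u : ℕ) : ℝ)
        + (1 / 2) * ∑ u ∈ G.neighborFinset v, (((fun _ : V => (1:ℕ)) u : ℕ) : ℝ) ≥ 1 := by
    intro v
    have h0 : (0:ℝ) ≤ ∑ u ∈ G.neighborFinset v, (((1:ℕ)) : ℝ) :=
      Finset.sum_nonneg fun _ _ => by positivity
    simp only [Nat.cast_one] at h0 ⊢
    linarith
  have hneN : {w : ℕ | ∃ q r : V → ℕ,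
      (∀ v, q v ≤ 1) ∧ (∀ v, r v ≤ 1) ∧
      (∀ v : V, (q v : ℝ)
        + (1 / 2) * ∑ u ∈ G.neighborFinset v, (q u : ℝ)
        + (1 / 2) * ∑ u ∈ G.neighborFinset v, (r u : ℝ) ≥ 1) ∧
      (∀ v, r v ≤ q v) ∧
      w = 2 * ∑ v, q v + ∑ v, r v}.Nonempty :=
    ⟨_, fun _ => 1, fun _ => 1, fun _ => le_refl 1, fun _ => le_refl 1,
      hconstr1, fun _ => le_refl 1, rfl⟩
  obtain ⟨q₀, r₀, hq₀, hr₀, hc₀, hrq₀, hw₀⟩ := Nat.sInf_mem hneN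
  set n := sInf {w : ℕ | ∃ q r : V → ℕ,
      (∀ v, q v ≤ 1) ∧ (∀ v, r v ≤ 1) ∧
      (∀ v : V, (q v : ℝ)
        + (1 / 2) * ∑ u ∈ G.neighborFinset v, (q u : ℝ)
        + (1 / 2) * ∑ u ∈ G.neighborFinset v, (r u : ℝ) ≥ 1) ∧
      (∀ v, r v ≤ q v) ∧
      w = 2 * ∑ v, q v + ∑ v, r v} with hn
  -- (n : ℝ) belongs to the real set
  have hmemR : (n : ℝ) ∈ {w : ℝ | ∃ (q : V → ℕ) (r : V → ℝ),
      (∀ v, q v ≤ 1) ∧ (∀ v, 0 ≤ r v) ∧ (∀ v, r v ≤ (q v : ℝ)) ∧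
      (∀ v : V, (q v : ℝ)
        + (1 / 2) * ∑ u ∈ G.neighborFinset v, (q u : ℝ)
        + (1 / 2) * ∑ u ∈ G.neighborFinset v, r u ≥ 1) ∧
      w = 2 * ∑ v, (q v : ℝ) + ∑ v, r v} := by
    refine ⟨q₀, fun v => (r₀ v : ℝ), hq₀, fun v => by positivity,
      fun v => by simpa using (Nat.cast_le (α := ℝ)).2 (hrq₀ v), hc₀, ?_⟩
    rw [hw₀]; push_cast; ring
  -- (n : ℝ) is a lower bound of the real set
  have hlb : ∀ w ∈ {w : ℝ | ∃ (q : V → ℕ) (r : V → ℝ),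
      (∀ v, q v ≤ 1) ∧ (∀ v, 0 ≤ r v) ∧ (∀ v, r v ≤ (q v : ℝ)) ∧
      (∀ v : V, (q v : ℝ)
        + (1 / 2) * ∑ u ∈ G.neighborFinset v, (q u : ℝ)
        + (1 / 2) * ∑ u ∈ G.neighborFinset v, r u ≥ 1) ∧
      w = 2 * ∑ v, (q v : ℝ) + ∑ v, r v}, (n : ℝ) ≤ w := by
    rintro w ⟨q, r, hq, hr0, hrq, hc, rfl⟩
    -- round r
    classical
    set r' : V → ℕ := fun u => if 1 ≤ r u then 1 else 0 with hr'
    have hr'le : ∀ u, (r' u : ℝ) ≤ r u := by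
      intro u; rw [hr']; dsimp only; split_ifs with h
      · simpa using h
      · simpa using hr0 u
    have hr'1 : ∀ u, r' u ≤ 1 := by
      intro u; by_cases h : 1 ≤ r u <;> simp [hr', h]
    have hr'q : ∀ u, r' u ≤ q u := by
      intro u; by_cases h : 1 ≤ r u <;> simp [hr', h]
      have : (1:ℝ) ≤ (q u : ℝ) := le_trans h (hrq u)
      exact_mod_cast this
    have hrzero : ∀ u, q u = 0 → r u = 0 := fun u h =>
      le_antisymm (by simpa [h] using hrq u) (hr0 u)
    -- feasibility of rounded solution
    have hfeas : ∀ v : V, (q v : ℝ)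
        + (1 / 2) * ∑ u ∈ G.neighborFinset v, (q u : ℝ)
        + (1 / 2) * ∑ u ∈ G.neighborFinset v, (r' u : ℝ) ≥ 1 := by
      intro v
      have hqsum0 : (0:ℝ) ≤ ∑ u ∈ G.neighborFinset v, (q u : ℝ) :=
        Finset.sum_nonneg fun _ _ => by positivity
      have hr'sum0 : (0:ℝ) ≤ ∑ u ∈ G.neighborFinset v, (r' u : ℝ) :=
        Finset.sum_nonneg fun _ _ => by positivity
      rcases Nat.eq_zero_or_pos (q v) with hv | hv
      · -- q v = 0
        have h2 : (2:ℝ) ≤ ∑ u ∈ G.neighborFinset v, (q u : ℝ)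
            + ∑ u ∈ G.neighborFinset v, r u := by
          have := hc v; rw [hv] at this; push_cast at this; linarith
        have key : 2 ≤ (∑ u ∈ G.neighborFinset v, q u)
            + (∑ u ∈ G.neighborFinset v, r' u) := by
          by_contra hlt
          push_neg at hlt
          have hqle : (∑ u ∈ G.neighborFinset v, q u) ≤ 1 :=
            Nat.lt_succ_iff.mp (Nat.lt_of_le_of_lt (Nat.le_add_right _ _) hlt)
          rcases Nat.le_one_iff_eq_zero_or_eq_one.mp hqle with h0 | h1
          · have hq0 : ∀ u ∈ G.neighborFinset v, q u = 0 :=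
              fun u hu => Finset.sum_eq_zero_iff.mp h0 u hu
            have e1 : ∑ u ∈ G.neighborFinset v, (q u : ℝ) = 0 :=
              Finset.sum_eq_zero fun u hu => by simp [hq0 u hu]
            have e2 : ∑ u ∈ G.neighborFinset v, r u = 0 :=
              Finset.sum_eq_zero fun u hu => hrzero u (hq0 u hu)
            rw [e1, e2] at h2; linarith
          · have hr'0 : (∑ u ∈ G.neighborFinset v, r' u) = 0 := by
              rw [h1] at hlt
              exact Nat.lt_one_iff.mp (Nat.lt_of_add_lt_add_left hlt)
            have hrlt : ∀ u ∈ G.neighborFinset v, r u < 1 := by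
              intro u hu
              have h0 : r' u = 0 := Finset.sum_eq_zero_iff.mp hr'0 u hu
              by_contra hge
              push_neg at hge
              simp [hr', hge] at h0
            obtain ⟨u0, hu0, hq0⟩ := Finset.exists_ne_zero_of_sum_ne_zero
              (by rw [h1]; exact one_ne_zero :
                (∑ u ∈ G.neighborFinset v, q u) ≠ 0)
            have hqr1 : ∑ u ∈ G.neighborFinset v, (q u : ℝ) = 1 := by
              have := congrArg (Nat.cast : ℕ → ℝ) h1
              push_cast at this; exact this
            have hle : ∀ u ∈ G.neighborFinset v, r u ≤ (q u : ℝ) * r u := by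
              intro u hu
              rcases Nat.eq_zero_or_pos (q u) with h | h
              · simp [hrzero u h]
              · have : (1:ℝ) ≤ (q u : ℝ) := by exact_mod_cast h
                exact le_mul_of_one_le_left (hr0 u) this
            have hstrict : ∑ u ∈ G.neighborFinset v, (q u : ℝ) * r u
                < ∑ u ∈ G.neighborFinset v, (q u : ℝ) := by
              refine Finset.sum_lt_sum (fun u hu => ?_) ⟨u0, hu0, ?_⟩
              · exact mul_le_of_le_one_right (by positivity) (le_of_lt (hrlt u hu))
              · have hpos : (0:ℝ) < (q u0 : ℝ) := by
                  exact_mod_cast Nat.pos_of_ne_zero hq0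
                exact mul_lt_of_lt_one_right hpos (hrlt u0 hu0)
            have hsum : ∑ u ∈ G.neighborFinset v, r u
                ≤ ∑ u ∈ G.neighborFinset v, (q u : ℝ) * r u :=
              Finset.sum_le_sum hle
            rw [hqr1] at h2 hstrict
            linarith
        have : (2:ℝ) ≤ ∑ u ∈ G.neighborFinset v, (q u : ℝ)
            + ∑ u ∈ G.neighborFinset v, (r' u : ℝ) := by exact_mod_cast key
        rw [hv]; push_cast; linarith
      · have : (1:ℝ) ≤ (q v : ℝ) := by exact_mod_cast hv
        linarith
    -- value of rounded solution is in the nat set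
    have hmemN : 2 * ∑ v, q v + ∑ v, r' v ∈ {w : ℕ | ∃ q r : V → ℕ,
      (∀ v, q v ≤ 1) ∧ (∀ v, r v ≤ 1) ∧
      (∀ v : V, (q v : ℝ)
        + (1 / 2) * ∑ u ∈ G.neighborFinset v, (q u : ℝ)
        + (1 / 2) * ∑ u ∈ G.neighborFinset v, (r u : ℝ) ≥ 1) ∧
      (∀ v, r v ≤ q v) ∧
      w = 2 * ∑ v, q v + ∑ v, r v} := ⟨q, r', hq, hr'1, hfeas, hr'q, rfl⟩
    have hnle : n ≤ 2 * ∑ v, q v + ∑ v, r' v := Nat.sInf_le hmemN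
    have h1 : ((2 * ∑ v, q v + ∑ v, r' v : ℕ) : ℝ)
        ≤ 2 * ∑ v, (q v : ℝ) + ∑ v, r v := by
      push_cast
      have : ∑ v, (r' v : ℝ) ≤ ∑ v, r v := Finset.sum_le_sum fun v _ => hr'le v
      linarith
    calc (n:ℝ) ≤ ((2 * ∑ v, q v + ∑ v, r' v : ℕ) : ℝ) := by exact_mod_cast hnle
      _ ≤ _ := h1
  exact le_antisymm (csInf_le ⟨(n:ℝ), hlb⟩ hmemR) (le_csInf ⟨_, hmemR⟩ hlb)
end

section
/- Let G = (V,E) be a finite simple graph, let q : V → {0,1} and r : V → ℝ satisfy, for every v ∈ V: 0 ≤ r_v, r_v ≤ q_v, and q_v + (1/2)Σ_{u∈N(v)} q_u + (1/2)Σ_{u∈N(v)} r_u ≥ 1. Define r′ : V → {0,1} by r′_v = 1 if r_v ≥ 1 and r′_v = 0 if r_v < 1. Then (q, r′) satisfies, for every v ∈ V: r′_v ≤ q_v and q_v + (1/2)Σ_{u∈N(v)} q_u + (1/2)Σ_{u∈N(v)} r′_u ≥ 1, and moreover 2Σ_{v∈V} q_v + Σ_{v∈V} r′_v ≤ 2Σ_{v∈V}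 q_v + Σ_{v∈V} r_v. -/
open Finset

/-- Rounding the relaxed variables `r` of a feasible solution of DRDP-2″
yields a feasible binary solution of DRDP-2′ with no larger objective value. -/
theorem drdp2''_to_drdp2' {V : Type*} [Fintype V] (G : SimpleGraph V)
    [DecidableRel G.Adj] (q : V → ℕ) (r : V → ℝ)
    (hq : ∀ v, q v ≤ 1) (hr0 : ∀ v, 0 ≤ r v) (hrq : ∀ v, r v ≤ (q v : ℝ))
    (hcons : ∀ v : V, (q v : ℝ)
      + (1 / 2) * ∑ u ∈ G.neighborFinset v, (q u : ℝ)
      + (1 / 2) * ∑ u ∈ G.neighborFinset v, r u ≥ 1) :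
    (∀ v : V, (if 1 ≤ r v then 1 else 0 : ℕ) ≤ q v) ∧
    (∀ v : V, (q v : ℝ)
      + (1 / 2) * ∑ u ∈ G.neighborFinset v, (q u : ℝ)
      + (1 / 2) * ∑ u ∈ G.neighborFinset v,
          ((if 1 ≤ r u then 1 else 0 : ℕ) : ℝ) ≥ 1) ∧
    2 * ∑ v, (q v : ℝ) + ∑ v, ((if 1 ≤ r v then 1 else 0 : ℕ) : ℝ)
      ≤ 2 * ∑ v, (q v : ℝ) + ∑ v, r v := by
  classical
  have hr'le : ∀ v, ((if 1 ≤ r v then 1 else 0 : ℕ) : ℝ) ≤ r v := by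
    intro v
    by_cases h : 1 ≤ r v
    · simp [h]
    · simp [h, hr0 v]
  have hr'nonneg : ∀ v, (0:ℝ) ≤ ((if 1 ≤ r v then 1 else 0 : ℕ) : ℝ) := by
    intro v; positivity
  refine ⟨?_, ?_, ?_⟩
  · intro v
    by_cases h : 1 ≤ r v
    · have h1 : (1:ℝ) ≤ (q v : ℝ) := le_trans h (hrq v)
      simp only [h, if_pos]
      exact_mod_cast h1
    · simp [h]
  · intro v
    set s := G.neighborFinset v with hs
    by_cases hqv : 1 ≤ q v
    · have h1 : (1:ℝ) ≤ (q v:ℝ) := by exact_mod_cast hqv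
      have h2 : (0:ℝ) ≤ ∑ u ∈ s, (q u:ℝ) :=
        Finset.sum_nonneg fun u _ => by positivity
      have h3 : (0:ℝ) ≤ ∑ u ∈ s, ((if 1 ≤ r u then 1 else 0 : ℕ) : ℝ) :=
        Finset.sum_nonneg fun u _ => hr'nonneg u
      linarith
    · have hqv0 : q v = 0 := by omega
      have hcv := hcons v
      rw [hqv0] at hcv
      push_cast at hcv
      have hrqs : ∑ u ∈ s, r u ≤ ∑ u ∈ s, (q u:ℝ) :=
        Finset.sum_le_sum fun u _ => hrq u
      have hS1 : (1:ℝ) ≤ ∑ u ∈ s, (q u:ℝ) := by linarith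
      have hScast : ∑ u ∈ s, (q u:ℝ) = ((∑ u ∈ s, q u : ℕ) : ℝ) := by
        push_cast; ring
      have hSnat : 1 ≤ ∑ u ∈ s, q u := by
        by_contra h
        have : ∑ u ∈ s, q u = 0 := by omega
        rw [hScast, this] at hS1; norm_num at hS1
      have h3 : (0:ℝ) ≤ ∑ u ∈ s, ((if 1 ≤ r u then 1 else 0 : ℕ) : ℝ) :=
        Finset.sum_nonneg fun u _ => hr'nonneg u
      rcases Nat.lt_or_ge (∑ u ∈ s, q u) 2 with hS2 | hS2
      · -- sum = 1 case
        have hSeq : ∑ u ∈ s, q u = 1 := by omega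
        have hSeqR : ∑ u ∈ s, (q u:ℝ) = 1 := by rw [hScast, hSeq]; norm_num
        have hrsum : (1:ℝ) ≤ ∑ u ∈ s, r u := by
          rw [hSeqR] at hcv; linarith
        obtain ⟨u0, hu0, hqu0⟩ : ∃ u ∈ s, q u ≠ 0 := by
          by_contra h
          push_neg at h
          have : ∑ u ∈ s, q u = 0 := Finset.sum_eq_zero h
          omega
        have hqu1 : q u0 = 1 := by have := hq u0; omega
        have hru0 : 1 ≤ r u0 := by
          by_contra h
          push_neg at h
          have hlt : ∑ u ∈ s, r u < ∑ u ∈ s, (q u:ℝ) :=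
            Finset.sum_lt_sum (fun u _ => hrq u)
              ⟨u0, hu0, by rw [hqu1]; push_cast; linarith⟩
          rw [hSeqR] at hlt; linarith
        have hsingle : (1:ℝ) ≤ ∑ u ∈ s, ((if 1 ≤ r u then 1 else 0 : ℕ) : ℝ) := by
          have := Finset.single_le_sum (f := fun u => ((if 1 ≤ r u then 1 else 0 : ℕ) : ℝ))
            (fun u _ => hr'nonneg u) hu0
          simpa [hru0] using this
        rw [hqv0]
        push_cast at hsingle ⊢
        rw [hSeqR]
        linarith
      · have hS2R : (2:ℝ) ≤ ∑ u ∈ s, (q u:ℝ) := by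
          rw [hScast]; exact_mod_cast hS2
        rw [hqv0]
        push_cast at h3 ⊢
        linarith
  · have : ∑ v, ((if 1 ≤ r v then 1 else 0 : ℕ) : ℝ) ≤ ∑ v, r v :=
      Finset.sum_le_sum fun v _ => hr'le v
    linarith
end

section
/- Let G = (V,E) be a finite simple graph and let x, y, z : V → {0,1} satisfy, for every v ∈ V: (i) x_v + y_v + z_v + (1/2)Σ_{u∈N(v)} y_u + Σ_{u∈N(v)} z_u ≥ 1; (ii) Σ_{u∈N(v)} y_u + Σ_{u∈N(v)} z_u ≥ x_v; (iii) x_v + y_v + z_v ≤ 1. Define f : V → {0,1,2,3} by f(v) = 1 if x_v = 1, f(v) = 2 if y_v = 1, f(v) = 3 if z_v = 1, and f(v) = 0 otherwise. Then f is a double Roman dominating function on G whose weight Σ_{v∈V} f(v) equals Σ_{v∈V} x_v + 2Σ_{v∈V} y_v + 3Σ_{v∈V} z_v. -/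
open Finset

/-- A feasible solution of DRDP-1 induces a DRDF of the same weight. -/
theorem drdp1_to_drdf {V : Type*} [Fintype V] (G : SimpleGraph V)
    [DecidableRel G.Adj] (x y z : V → ℕ)
    (hx : ∀ v, x v ≤ 1) (hy : ∀ v, y v ≤ 1) (hz : ∀ v, z v ≤ 1)
    (hc1 : ∀ v : V, (x v : ℝ) + (y v : ℝ) + (z v : ℝ)
      + (1 / 2) * ∑ u ∈ G.neighborFinset v, (y u : ℝ)
      + ∑ u ∈ G.neighborFinset v, (z u : ℝ) ≥ 1)
    (hc2 : ∀ v : V, ∑ u ∈ G.neighborFinset v, (y u : ℝ)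
      + ∑ u ∈ G.neighborFinset v, (z u : ℝ) ≥ (x v : ℝ))
    (hc3 : ∀ v, x v + y v + z v ≤ 1)
    (f : V → ℕ)
    (hfdef : ∀ v, f v = if x v = 1 then 1 else if y v = 1 then 2
      else if z v = 1 then 3 else 0) :
    IsDRDF G f ∧ ∑ v, f v = ∑ v, x v + 2 * ∑ v, y v + 3 * ∑ v, z v := by
  classical
  have hf : ∀ v, f v = x v + 2 * y v + 3 * z v := by
    intro v
    have h1 := hx v; have h2 := hy v; have h3 := hz v; have h4 := hc3 v
    rw [hfdef v]; split_ifs <;> omega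
  constructor
  · refine ⟨?_, ?_, ?_⟩
    · intro v
      have h1 := hx v; have h2 := hy v; have h3 := hz v; have h4 := hc3 v
      rw [hf v]; omega
    · intro v hv
      rw [hf v] at hv
      have hx0 : x v = 0 := by omega
      have hy0 : y v = 0 := by omega
      have hz0 : z v = 0 := by omega
      have h1 := hc1 v
      rw [hx0, hy0, hz0] at h1
      have hR : (2 : ℝ) ≤ ((∑ u ∈ G.neighborFinset v, y u : ℕ) : ℝ)
          + 2 * ((∑ u ∈ G.neighborFinset v, z u : ℕ) : ℝ) := by
        push_cast
        push_cast at h1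
        linarith
      have hN : 2 ≤ (∑ u ∈ G.neighborFinset v, y u)
          + 2 * (∑ u ∈ G.neighborFinset v, z u) := by exact_mod_cast hR
      by_cases hzs : (∑ u ∈ G.neighborFinset v, z u) = 0
      · -- two neighbors with y = 1
        left
        have hys : 2 ≤ ∑ u ∈ G.neighborFinset v, y u := by omega
        have h0 : (∑ u ∈ G.neighborFinset v, y u) ≠ 0 := by omega
        obtain ⟨u₁, hu₁mem, hu₁⟩ := Finset.exists_ne_zero_of_sum_ne_zero h0
        have hy1 : y u₁ = 1 := by have := hy u₁; omega
        have hsplit := Finset.sum_erase_add (G.neighborFinset v) y hu₁mem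
        have h0' : (∑ u ∈ (G.neighborFinset v).erase u₁, y u) ≠ 0 := by omega
        obtain ⟨u₂, hu₂mem, hu₂⟩ := Finset.exists_ne_zero_of_sum_ne_zero h0'
        have hy2 : y u₂ = 1 := by have := hy u₂; omega
        have hne : u₂ ≠ u₁ := Finset.ne_of_mem_erase hu₂mem
        have hu₂mem' : u₂ ∈ G.neighborFinset v := Finset.mem_of_mem_erase hu₂mem
        refine ⟨u₁, u₂, hne.symm, ?_, ?_, ?_, ?_⟩
        · exact (SimpleGraph.mem_neighborFinset _ _ _).mp hu₁mem
        · exact (SimpleGraph.mem_neighborFinset _ _ _).mp hu₂mem'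
        · have := hc3 u₁; rw [hf u₁]; omega
        · have := hc3 u₂; rw [hf u₂]; omega
      · right
        obtain ⟨u, humem, hu⟩ := Finset.exists_ne_zero_of_sum_ne_zero hzs
        have hz1 : z u = 1 := by have := hz u; omega
        refine ⟨u, (SimpleGraph.mem_neighborFinset _ _ _).mp humem, ?_⟩
        have := hc3 u; rw [hf u]; omega
    · intro v hv
      rw [hf v] at hv
      have hx1 : x v = 1 := by have := hy v; have := hz v; omega
      have h2 := hc2 v
      rw [hx1] at h2
      have hR : (1 : ℝ) ≤ ((∑ u ∈ G.neighborFinset v, y u : ℕ) : ℝ)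
          + ((∑ u ∈ G.neighborFinset v, z u : ℕ) : ℝ) := by
        push_cast
        push_cast at h2
        linarith
      have hN : 1 ≤ (∑ u ∈ G.neighborFinset v, y u)
          + (∑ u ∈ G.neighborFinset v, z u) := by exact_mod_cast hR
      by_cases hys : (∑ u ∈ G.neighborFinset v, y u) = 0
      · have hzs : (∑ u ∈ G.neighborFinset v, z u) ≠ 0 := by omega
        obtain ⟨u, humem, hu⟩ := Finset.exists_ne_zero_of_sum_ne_zero hzs
        refine ⟨u, (SimpleGraph.mem_neighborFinset _ _ _).mp humem, ?_⟩
        have := hc3 u; have := hz u; rw [hf u]; omega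
      · obtain ⟨u, humem, hu⟩ := Finset.exists_ne_zero_of_sum_ne_zero hys
        refine ⟨u, (SimpleGraph.mem_neighborFinset _ _ _).mp humem, ?_⟩
        have := hc3 u; have := hy u; rw [hf u]; omega
  · calc ∑ v, f v = ∑ v, (x v + 2 * y v + 3 * z v) :=
          Finset.sum_congr rfl fun v _ => hf v
      _ = ∑ v, x v + 2 * ∑ v, y v + 3 * ∑ v, z v := by
          rw [Finset.sum_add_distrib, Finset.sum_add_distrib,
            ← Finset.mul_sum, ← Finset.mul_sum]
end
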